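/- arXiv:math/0609558 — 3 statements merged into one kernel-verified Lean document; each statement's English description precedes it below -/
import Mathlib

section
/- The complex hyperbolic metric expressed in horospherical coordinates on the Siegel domain equals g = (df² + η₀²)/f² + |dW|²/f, where f = Re(zₙ) − (1/4)(|z₁|² + ⋯ + |z_{n−1}|²) and η₀ = dv + (1/2)Im(W̄ dW). -/
open Complex Finset

noncomputable section

/-- The Hermitian form of signature (n,1) on ℂ^{n+1}:
`⟨Z,Z'⟩ = 2(z̄₀z'ₙ + z̄ₙz'₀) + Σ_{k=1}^{n-1} z̄ₖ z'ₖ`. -/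
def herm (n : ℕ) (Z Z' : Fin (n + 1) → ℂ) : ℂ :=
  2 * ((starRingEnd ℂ) (Z 0) * Z' (Fin.last n) + (starRingEnd ℂ) (Z (Fin.last n)) * Z' 0) +
    ∑ k : Fin (n + 1), if k ≠ 0 ∧ k ≠ Fin.last n then (starRingEnd ℂ) (Z k) * Z' k else 0

/-- Defining function of the Siegel domain:
`f(z) = Re zₙ − (1/4) Σ_{k=1}^{n-1} |z_k|²` (here `z : Fin (m+1) → ℂ`, `zₙ = z (last)`,
`W = (z₀,…,z_{m-1})` the first `m` coordinates). -/
def fS (m : ℕ) (z : Fin (m + 1) → ℂ) : ℝ :=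
  (z (Fin.last m)).re - (1 / 4) * ∑ k : Fin m, Complex.normSq (z k.castSucc)

/-- The differential `df` evaluated on a tangent vector `V` at the point `z`. -/
def dfS (m : ℕ) (z V : Fin (m + 1) → ℂ) : ℝ :=
  (V (Fin.last m)).re - (1 / 2) * ∑ k : Fin m, ((starRingEnd ℂ) (z k.castSucc) * V k.castSucc).re

/-- The contact form `η₀ = dv + ½ Im(W̄ dW)` evaluated on `V` (horospherical `v = −Im zₙ`). -/
def eta0S (m : ℕ) (z V : Fin (m + 1) → ℂ) : ℝ :=
  -(V (Fin.last m)).im + (1 / 2) * ∑ k : Fin m, ((starRingEnd ℂ) (z k.castSucc) * V k.castSucc).im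

/-!
Write the point as `Z = (-1, z)` and the tangent vector as `(0, V)`. The three Hermitian products
entering the metric are then horospherical quantities: `⟨Z, Z⟩ = -4f`, `⟨(0,V), (0,V)⟩ = |dW(V)|²`
and `⟨Z, (0,V)⟩ = -2 (df(V) - i η₀(V))`, the last one having `⟨(0,V), Z⟩` as its conjugate.
The metric is therefore `4 (-4f |dW|² - 4 (df² + η₀²)) / (-16 f²)`.
-/

open ComplexConjugate

lemma herm_conj_symm (n : ℕ) (Z Z' : Fin (n + 1) → ℂ) :
    herm n Z' Z = conj (herm n Z Z') := by
  simp only [herm, map_add, map_mul, map_sum, map_ofNat, conj_conj, apply_ite conj, map_zero]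
  congr 1
  · ring
  · exact sum_congr rfl fun k _ => by split_ifs <;> ring

lemma herm_cons (m : ℕ) (a b : ℂ) (z z' : Fin (m + 1) → ℂ) :
    herm (m + 1) (Fin.cons a z) (Fin.cons b z')
      = 2 * (conj a * z' (Fin.last m) + conj (z (Fin.last m)) * b)
        + ∑ j : Fin m, conj (z j.castSucc) * z' j.castSucc := by
  rw [herm, ← Fin.succ_last, Fin.sum_univ_succ, Fin.sum_univ_castSucc]
  simp only [Fin.cons_zero, Fin.cons_succ, ne_eq, not_true_eq_false, and_false, false_and,
    if_false, zero_add, add_zero, Fin.succ_ne_zero, not_false_eq_true, true_and, Fin.succ_inj,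
    (Fin.castSucc_lt_last _).ne, if_true]

lemma herm_cons_neg_one_self (m : ℕ) (z : Fin (m + 1) → ℂ) :
    herm (m + 1) (Fin.cons (-1) z) (Fin.cons (-1) z) = ((-4 * fS m z : ℝ) : ℂ) := by
  simp only [herm_cons, map_neg, map_one, ← normSq_eq_conj_mul_self, fS]
  push_cast
  rw [re_eq_add_conj]
  ring

lemma herm_cons_zero_self (m : ℕ) (V : Fin (m + 1) → ℂ) :
    herm (m + 1) (Fin.cons 0 V) (Fin.cons 0 V)
      = ((∑ k : Fin m, normSq (V k.castSucc) : ℝ) : ℂ) := by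
  simp [herm_cons, ← normSq_eq_conj_mul_self]

lemma herm_cons_neg_one_cons_zero (m : ℕ) (z V : Fin (m + 1) → ℂ) :
    herm (m + 1) (Fin.cons (-1) z) (Fin.cons 0 V) = 2 * (-dfS m z V + eta0S m z V * I) := by
  rw [herm_cons]
  apply Complex.ext <;> simp [dfS, eta0S, re_sum, im_sum] <;> ring

/-- In the affine chart `z₀ = −1` of the Siegel domain
(horospherical coordinates), the complex hyperbolic metric
`g^{CH}_Z(V,V) = 4(⟨Z,Z⟩⟨V,V⟩ − ⟨Z,V⟩⟨V,Z⟩)/(−⟨Z,Z⟩²)` equals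
`(df(V)² + η₀(V)²)/f² + |dW(V)|²/f`. -/
theorem complexHyperbolic_metric_horospherical (m : ℕ) (z V : Fin (m + 1) → ℂ)
    (hf : 0 < fS m z) :
    (4 * (herm (m + 1) (Fin.cons (-1) z) (Fin.cons (-1) z)
            * herm (m + 1) (Fin.cons 0 V) (Fin.cons 0 V)
          - herm (m + 1) (Fin.cons (-1) z) (Fin.cons 0 V)
            * herm (m + 1) (Fin.cons 0 V) (Fin.cons (-1) z))
        / (-(herm (m + 1) (Fin.cons (-1) z) (Fin.cons (-1) z)) ^ 2)).re
      = ((dfS m z V) ^ 2 + (eta0S m z V) ^ 2) / (fS m z) ^ 2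
        + (∑ k : Fin m, Complex.normSq (V k.castSucc)) / fS m z := by
  have hnormSq : normSq (herm (m + 1) (Fin.cons (-1) z) (Fin.cons 0 V))
      = 4 * (dfS m z V ^ 2 + eta0S m z V ^ 2) := by
    rw [herm_cons_neg_one_cons_zero, normSq_mul, normSq_ofNat, ← ofReal_neg, normSq_add_mul_I]
    ring
  rw [herm_conj_symm (m + 1) (Fin.cons (-1) z) (Fin.cons 0 V), mul_conj, hnormSq,
    herm_cons_neg_one_self, herm_cons_zero_self]
  simp only [← ofReal_ofNat, ← ofReal_mul, ← ofReal_sub, ← ofReal_neg, ← ofReal_pow, ← ofReal_div,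
    ofReal_re]
  field_simp
  ring
end
end

section
/- The conversion K_λ: [z₀:⋯:zₙ] ↦ [z̄ₙ/λ : z̄₁ : ⋯ : z̄_{n−1} : λz̄₀] is an isometric involution of CHⁿ that preserves D_λ and exchanges B_λ⁺ and B_λ⁻, and it is antiholomorphic. -/
open Complex Finset

noncomputable section

/-- The conversion `K_λ : [z₀:⋯:zₙ] ↦ [z̄ₙ/λ : z̄₁ : ⋯ : z̄_{n−1} : λz̄₀]`. -/
def Kconv (n : ℕ) (lam : ℝ) (Z : Fin (n + 1) → ℂ) : Fin (n + 1) → ℂ :=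
  fun k => if k = 0 then (starRingEnd ℂ) (Z (Fin.last n)) / (lam : ℂ)
    else if k = Fin.last n then (lam : ℂ) * (starRingEnd ℂ) (Z 0)
    else (starRingEnd ℂ) (Z k)

section Kconv

variable {n : ℕ} {lam : ℝ}

lemma Kconv_apply_zero (Z : Fin (n + 1) → ℂ) :
    Kconv n lam Z 0 = (starRingEnd ℂ) (Z (Fin.last n)) / (lam : ℂ) :=
  if_pos rfl

lemma Kconv_apply_last (hn : 1 ≤ n) (Z : Fin (n + 1) → ℂ) :
    Kconv n lam Z (Fin.last n) = (lam : ℂ) * (starRingEnd ℂ) (Z 0) := by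
  have hlast : Fin.last n ≠ 0 := Fin.pos_iff_ne_zero.mp hn
  simp [Kconv, hlast]

lemma Kconv_apply_of_ne {k : Fin (n + 1)} (h0 : k ≠ 0) (hl : k ≠ Fin.last n)
    (Z : Fin (n + 1) → ℂ) : Kconv n lam Z k = (starRingEnd ℂ) (Z k) := by
  simp [Kconv, h0, hl]

lemma Kconv_smul (c : ℂ) (Z : Fin (n + 1) → ℂ) :
    Kconv n lam (c • Z) = (starRingEnd ℂ) c • Kconv n lam Z := by
  funext k
  simp only [Kconv, Pi.smul_apply, smul_eq_mul, map_mul]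
  split_ifs <;> ring

lemma Kconv_involutive (hn : 1 ≤ n) (hlam : lam ≠ 0) : Function.Involutive (Kconv n lam) := by
  have hlamC : (lam : ℂ) ≠ 0 := ofReal_ne_zero.mpr hlam
  intro Z
  funext k
  by_cases h0 : k = 0
  · subst h0
    rw [Kconv_apply_zero, Kconv_apply_last hn, map_mul, conj_ofReal, conj_conj,
      mul_div_cancel_left₀ _ hlamC]
  by_cases hl : k = Fin.last n
  · subst hl
    rw [Kconv_apply_last hn, Kconv_apply_zero, map_div₀, conj_ofReal, conj_conj,
      mul_div_cancel₀ _ hlamC]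
  rw [Kconv_apply_of_ne h0 hl, Kconv_apply_of_ne h0 hl, conj_conj]

lemma herm_Kconv (hn : 1 ≤ n) (hlam : lam ≠ 0) (Z Z' : Fin (n + 1) → ℂ) :
    herm n (Kconv n lam Z) (Kconv n lam Z') = (starRingEnd ℂ) (herm n Z Z') := by
  have hlamC : (lam : ℂ) ≠ 0 := ofReal_ne_zero.mpr hlam
  have hmiddle : (∑ k : Fin (n + 1), if k ≠ 0 ∧ k ≠ Fin.last n then
        (starRingEnd ℂ) (Kconv n lam Z k) * Kconv n lam Z' k else 0)
      = ∑ k : Fin (n + 1), (starRingEnd ℂ)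
        (if k ≠ 0 ∧ k ≠ Fin.last n then (starRingEnd ℂ) (Z k) * Z' k else 0) := by
    refine sum_congr rfl fun k _ => ?_
    split_ifs with h
    · rw [Kconv_apply_of_ne h.1 h.2, Kconv_apply_of_ne h.1 h.2, map_mul, conj_conj, mul_comm]
    · rw [map_zero]
  unfold herm
  rw [hmiddle, ← map_sum, Kconv_apply_zero, Kconv_apply_zero, Kconv_apply_last hn,
    Kconv_apply_last hn]
  simp only [map_add, map_mul, map_div₀, map_ofNat, conj_conj, conj_ofReal]
  field_simp
  ring

lemma re_herm_Kconv_self (hn : 1 ≤ n) (hlam : lam ≠ 0) (Z : Fin (n + 1) → ℂ) :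
    (herm n (Kconv n lam Z) (Kconv n lam Z)).re = (herm n Z Z).re := by
  rw [herm_Kconv hn hlam, conj_re]

lemma mul_norm_Kconv_apply_zero (hlam : 0 < lam) (Z : Fin (n + 1) → ℂ) :
    lam * ‖Kconv n lam Z 0‖ = ‖Z (Fin.last n)‖ := by
  rw [Kconv_apply_zero, norm_div, RCLike.norm_conj, norm_real, Real.norm_of_nonneg hlam.le,
    mul_div_cancel₀ _ hlam.ne']

lemma norm_Kconv_apply_last (hn : 1 ≤ n) (hlam : 0 ≤ lam) (Z : Fin (n + 1) → ℂ) :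
    ‖Kconv n lam Z (Fin.last n)‖ = lam * ‖Z 0‖ := by
  rw [Kconv_apply_last hn, norm_mul, RCLike.norm_conj, norm_real, Real.norm_of_nonneg hlam]

lemma Kconv_image_setOf (hn : 1 ≤ n) (hlam : 0 < lam) (R : ℝ → ℝ → Prop) :
    Kconv n lam '' {Z | (herm n Z Z).re < 0 ∧ R (lam * ‖Z 0‖) ‖Z (Fin.last n)‖}
      = {Z | (herm n Z Z).re < 0 ∧ R ‖Z (Fin.last n)‖ (lam * ‖Z 0‖)} := by
  rw [(Kconv_involutive hn hlam.ne').image_eq_preimage_symm]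
  ext Z
  simp only [Set.mem_preimage, Set.mem_ofPred_eq, re_herm_Kconv_self hn hlam.ne',
    mul_norm_Kconv_apply_zero hlam, norm_Kconv_apply_last hn hlam.le]

end Kconv

/-- The conversion `K_λ` is an isometric involution of CHⁿ (it preserves the
Hermitian form up to complex conjugation), it is antiholomorphic (conjugate-linear on
homogeneous coordinates), preserves `D_λ = {λ|z₀| = |zₙ|}` and exchanges
`B_λ⁺ = {λ|z₀| > |zₙ|}` and `B_λ⁻ = {λ|z₀| < |zₙ|}`. -/
theorem Kconv_properties (n : ℕ) (hn : 1 ≤ n) (lam : ℝ) (hlam : 0 < lam) :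
    (∀ Z Z' : Fin (n + 1) → ℂ,
        herm n (Kconv n lam Z) (Kconv n lam Z') = (starRingEnd ℂ) (herm n Z Z')) ∧
    (∀ Z : Fin (n + 1) → ℂ, Kconv n lam (Kconv n lam Z) = Z) ∧
    (∀ (c : ℂ) (Z : Fin (n + 1) → ℂ),
        Kconv n lam (c • Z) = (starRingEnd ℂ) c • Kconv n lam Z) ∧
    (Kconv n lam '' {Z : Fin (n + 1) → ℂ | (herm n Z Z).re < 0 ∧
        lam * ‖Z 0‖ = ‖Z (Fin.last n)‖}
      = {Z : Fin (n + 1) → ℂ | (herm n Z Z).re < 0 ∧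
        lam * ‖Z 0‖ = ‖Z (Fin.last n)‖}) ∧
    (Kconv n lam '' {Z : Fin (n + 1) → ℂ | (herm n Z Z).re < 0 ∧
        lam * ‖Z 0‖ > ‖Z (Fin.last n)‖}
      = {Z : Fin (n + 1) → ℂ | (herm n Z Z).re < 0 ∧
        lam * ‖Z 0‖ < ‖Z (Fin.last n)‖}) := by
  refine ⟨herm_Kconv hn hlam.ne', Kconv_involutive hn hlam.ne', Kconv_smul, ?_, ?_⟩
  · simpa only [eq_comm] using Kconv_image_setOf hn hlam (· = ·)
  · exact Kconv_image_setOf hn hlam (· > ·)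
end
end

section
/- In horospherical coordinates (u, v, W) on CHⁿ, the inversion I₁ pulls back the horospherical height function u to I₁*u = u / ((u + |W|²/4)² + v²). In particular the fixed hypersurface D₁ = ∂B₁⁺ is given by the equation (u + |W|²/4)² + v² = 1, and I₁⁻¹(D_λ) = D_{1/λ}. -/
open Complex Finset

noncomputable section

/-- Horospherical coordinate `v = −Im zₙ` (so that `f + iv = z̄ₙ − (1/4)|W|²`). -/
def vS (m : ℕ) (z : Fin (m + 1) → ℂ) : ℝ := -(z (Fin.last m)).im

/-- The inversion `I₁` written in the affine chart `z₀ = −1`: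
`(z₁,…,z_{n−1},zₙ) ↦ (−z₁/zₙ, …, −z_{n−1}/zₙ, 1/zₙ)`. -/
def I1c (m : ℕ) (z : Fin (m + 1) → ℂ) : Fin (m + 1) → ℂ :=
  fun k => if k = Fin.last m then 1 / z (Fin.last m) else -(z k) / z (Fin.last m)

/-! Since `u + |W|²/4 = Re zₙ` and `v = −Im zₙ`, the denominator `(u + |W|²/4)² + v²` is just
`|zₙ|²`. The inversion sends `zₙ ↦ zₙ⁻¹` and `W ↦ −W/zₙ`, and both `Re zₙ⁻¹` and `|W/zₙ|²`
are the old quantities divided by `|zₙ|²`, so `u` itself gets divided by `|zₙ|²`. -/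

section Horospherical

variable {m : ℕ} (z : Fin (m + 1) → ℂ)

lemma fS_add_quarter_sum_normSq :
    fS m z + (1 / 4) * ∑ k : Fin m, normSq (z k.castSucc) = (z (Fin.last m)).re := by
  rw [fS, sub_add_cancel]

lemma fS_add_quarter_sum_normSq_sq_add_vS_sq :
    (fS m z + (1 / 4) * ∑ k : Fin m, normSq (z k.castSucc)) ^ 2 + vS m z ^ 2 =
      normSq (z (Fin.last m)) := by
  rw [fS_add_quarter_sum_normSq, vS, normSq_apply]
  ring

lemma I1c_last : I1c m z (Fin.last m) = (z (Fin.last m))⁻¹ := by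
  simp [I1c]

lemma I1c_castSucc (k : Fin m) :
    I1c m z k.castSucc = -z k.castSucc / z (Fin.last m) := by
  simp [I1c, (Fin.castSucc_lt_last k).ne]

lemma fS_I1c : fS m (I1c m z) = fS m z / normSq (z (Fin.last m)) := by
  simp only [fS, I1c_last, I1c_castSucc, map_div₀, normSq_neg, inv_re, ← Finset.sum_div]
  rw [sub_div, mul_div_assoc]

end Horospherical

theorem I1_horospherical_general (m : ℕ) (z : Fin (m + 1) → ℂ) :
    (fS m (I1c m z) = fS m z /
      ((fS m z + (1 / 4) * ∑ k : Fin m, Complex.normSq (z k.castSucc)) ^ 2 + (vS m z) ^ 2)) ∧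
    (‖z (Fin.last m)‖ = 1 ↔
      (fS m z + (1 / 4) * ∑ k : Fin m, Complex.normSq (z k.castSucc)) ^ 2 + (vS m z) ^ 2 = 1) ∧
    (∀ lam : ℝ, 0 < lam →
      (‖(I1c m z) (Fin.last m)‖ = lam ↔
        ‖z (Fin.last m)‖ = 1 / lam)) := by
  rw [fS_add_quarter_sum_normSq_sq_add_vS_sq, I1c_last]
  refine ⟨fS_I1c z, ?_, fun lam _ => ?_⟩
  · rw [← Complex.sq_norm, pow_eq_one_iff_of_nonneg (norm_nonneg _) two_ne_zero]
  · rw [norm_inv, inv_eq_iff_eq_inv, one_div]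

/-- In horospherical coordinates `(u,v,W)`, the inversion `I₁` pulls back
`u` to `u/((u + |W|²/4)² + v²)`; the hypersurface `D₁` is given by
`(u + |W|²/4)² + v² = 1` (i.e. `|zₙ| = 1` in the chart `z₀ = −1`), and
`I₁⁻¹(D_λ) = D_{1/λ}`. -/
theorem I1_horospherical (m : ℕ) (z : Fin (m + 1) → ℂ) (hz : z (Fin.last m) ≠ 0) :
    (fS m (I1c m z) = fS m z /
      ((fS m z + (1 / 4) * ∑ k : Fin m, Complex.normSq (z k.castSucc)) ^ 2 + (vS m z) ^ 2)) ∧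
    (‖z (Fin.last m)‖ = 1 ↔
      (fS m z + (1 / 4) * ∑ k : Fin m, Complex.normSq (z k.castSucc)) ^ 2 + (vS m z) ^ 2 = 1) ∧
    (∀ lam : ℝ, 0 < lam →
      (‖(I1c m z) (Fin.last m)‖ = lam ↔
        ‖z (Fin.last m)‖ = 1 / lam)) :=
  I1_horospherical_general m z
end
end
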